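/- For every z ∈ ℝ^k, the Shannon entropy of the softmax distribution, H(t) = −Σ_{i=1}^k softmax(t·z)_i · log softmax(t·z)_i, is a nonincreasing function of t on [0, ∞). In particular, for every 0 < λ < 1, the entropy of softmax(λ·z) is at least the entropy of softmax(z): shrinking the logits increases the entropy of the output distribution. -/

import Mathlib

/-!
Write `Z(t) = log ∑ᵢ exp (t zᵢ)` and `μ(t) = ∑ᵢ softmax(t z)ᵢ zᵢ`, so that `H(t) = Z(t) - t μ(t)`.
Gibbs' inequality for `softmax (t z)` against `softmax (s z)` says that `Z` lies above its
tangent lines, `Z(s) ≥ Z(t) + (s - t) μ(t)`: `Z` is convex with slope `μ`, hence `μ` is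
nondecreasing. For `0 ≤ s ≤ t` this gives `H(t) ≤ Z(s) - s μ(t) ≤ Z(s) - s μ(s) = H(s)`.
-/

/-- Softmax: `softmax(z)_i = exp(z_i) / ∑_j exp(z_j)`. -/
noncomputable def softmax {k : ℕ} (z : Fin k → ℝ) : Fin k → ℝ :=
  fun i => Real.exp (z i) / ∑ j, Real.exp (z j)

/-- Shannon entropy of the softmax distribution of `z`:
`H = −∑_i softmax(z)_i · log softmax(z)_i`. -/
noncomputable def softmaxEntropy {k : ℕ} (z : Fin k → ℝ) : ℝ :=
  -∑ i, softmax z i * Real.log (softmax z i)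

open Real Finset

theorem sum_mul_log_le_sum_mul_log {ι : Type*} [Fintype ι] {p q : ι → ℝ}
    (hp : ∀ i, 0 < p i) (hq : ∀ i, 0 < q i) (hqp : ∑ i, q i ≤ ∑ i, p i) :
    ∑ i, p i * log (q i) ≤ ∑ i, p i * log (p i) := by
  have hterm : ∀ i, p i * log (q i) - p i * log (p i) ≤ q i - p i := fun i => by
    have := log_le_sub_one_of_pos (div_pos (hq i) (hp i))
    rw [log_div (hq i).ne' (hp i).ne'] at this
    calc p i * log (q i) - p i * log (p i) = p i * (log (q i) - log (p i)) := by ring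
      _ ≤ p i * (q i / p i - 1) := mul_le_mul_of_nonneg_left this (hp i).le
      _ = q i - p i := by rw [mul_sub, mul_div_cancel₀ _ (hp i).ne', mul_one]
  have := sum_le_sum fun i (_ : i ∈ univ) => hterm i
  rw [sum_sub_distrib, sum_sub_distrib] at this
  linarith

noncomputable def logSumExp {k : ℕ} (z : Fin k → ℝ) : ℝ :=
  log (∑ j, exp (z j))

section Softmax

variable {k : ℕ} [Nonempty (Fin k)]

theorem sum_exp_pos (z : Fin k → ℝ) : 0 < ∑ j, exp (z j) :=
  sum_pos (fun _ _ => exp_pos _) univ_nonempty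

theorem softmax_pos (z : Fin k → ℝ) (i : Fin k) : 0 < softmax z i :=
  div_pos (exp_pos _) (sum_exp_pos z)

theorem sum_softmax (z : Fin k → ℝ) : ∑ i, softmax z i = 1 := by
  simp only [softmax]
  rw [← sum_div, div_self (sum_exp_pos z).ne']

theorem log_softmax (z : Fin k → ℝ) (i : Fin k) : log (softmax z i) = z i - logSumExp z := by
  rw [softmax, log_div (exp_ne_zero _) (sum_exp_pos z).ne', log_exp, logSumExp]

theorem sum_softmax_mul_sub (z a : Fin k → ℝ) (c : ℝ) :
    ∑ i, softmax z i * (a i - c) = ∑ i, softmax z i * a i - c := by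
  simp only [mul_sub, sum_sub_distrib, ← sum_mul, sum_softmax, one_mul]

theorem softmaxEntropy_eq (z : Fin k → ℝ) :
    softmaxEntropy z = logSumExp z - ∑ i, softmax z i * z i := by
  simp only [softmaxEntropy, log_softmax, sum_softmax_mul_sub]
  ring

/-- Gibbs' inequality for `softmax z` against `softmax w`: `logSumExp` is convex with
gradient `softmax`. -/
theorem logSumExp_sub_le (z w : Fin k → ℝ) :
    logSumExp z - logSumExp w ≤ ∑ i, softmax z i * (z i - w i) := by
  have hgibbs := sum_mul_log_le_sum_mul_log (softmax_pos z) (softmax_pos w)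
    (by rw [sum_softmax, sum_softmax])
  simp only [log_softmax, sum_softmax_mul_sub] at hgibbs
  simp only [mul_sub, sum_sub_distrib]
  linarith

noncomputable def softmaxMean (z : Fin k → ℝ) (t : ℝ) : ℝ :=
  ∑ i, softmax (t • z) i * z i

theorem logSumExp_smul_sub_le (z : Fin k → ℝ) (s t : ℝ) :
    logSumExp (t • z) - logSumExp (s • z) ≤ (t - s) * softmaxMean z t := by
  refine (logSumExp_sub_le _ _).trans_eq ?_
  simp only [softmaxMean, mul_sum, Pi.smul_apply, smul_eq_mul]
  exact sum_congr rfl fun i _ => by ring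

theorem monotone_softmaxMean (z : Fin k → ℝ) : Monotone (softmaxMean z) := by
  intro s t hst
  rcases hst.eq_or_lt with rfl | hlt
  · rfl
  have hs := logSumExp_smul_sub_le z s t
  have ht := logSumExp_smul_sub_le z t s
  have : 0 ≤ (t - s) * (softmaxMean z t - softmaxMean z s) := by linarith
  exact sub_nonneg.1 (nonneg_of_mul_nonneg_right this (sub_pos.2 hlt))

theorem softmaxEntropy_smul (z : Fin k → ℝ) (t : ℝ) :
    softmaxEntropy (t • z) = logSumExp (t • z) - t * softmaxMean z t := by
  simp only [softmaxEntropy_eq, softmaxMean, mul_sum, Pi.smul_apply, smul_eq_mul]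
  congr 1
  exact sum_congr rfl fun i _ => by ring

end Softmax

/-- The entropy of `softmax(t·z)` is a nonincreasing function of `t` on `[0, ∞)`.
In particular, for every `0 < λ < 1`, shrinking the logits increases the
entropy of the output distribution:
`H(softmax(λ·z)) ≥ H(softmax(z))`. -/
theorem softmaxEntropy_antitone {k : ℕ} [Nonempty (Fin k)] (z : Fin k → ℝ) :
    AntitoneOn (fun t : ℝ => softmaxEntropy (t • z)) (Set.Ici (0 : ℝ)) ∧
    ∀ lam : ℝ, 0 < lam → lam < 1 → softmaxEntropy z ≤ softmaxEntropy (lam • z) := by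
  have hanti : AntitoneOn (fun t : ℝ => softmaxEntropy (t • z)) (Set.Ici (0 : ℝ)) := by
    intro s (hs : 0 ≤ s) t _ hst
    have htangent := logSumExp_smul_sub_le z s t
    have hmean := mul_le_mul_of_nonneg_left (monotone_softmaxMean z hst) hs
    simp only [softmaxEntropy_smul]
    linarith
  refine ⟨hanti, fun lam hlam0 hlam1 => ?_⟩
  simpa using hanti (Set.mem_Ici.2 hlam0.le) (Set.mem_Ici.2 zero_le_one) hlam1.le
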